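/- arXiv:1601.06723 — 2 statements merged into one kernel-verified Lean document; each statement's English description precedes it below -/
import Mathlib

section
/- The matrix geometric mean is congruence invariant: for positive definite A, B and invertible C, C* G(A,B) C = G(C* A C, C* B C). -/
open Matrix
open scoped ComplexOrder Classical

/-- Square root of a positive semidefinite matrix, extended by `0`. -/
noncomputable def msqrt {n : Type*} [Fintype n] [DecidableEq n] (A : Matrix n n ℂ) :
    Matrix n n ℂ :=
  if h : A.PosSemidef then
    (h.1.eigenvectorUnitary : Matrix n n ℂ) * diagonal ((↑) ∘ Real.sqrt ∘ h.1.eigenvalues) *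
      (star h.1.eigenvectorUnitary : Matrix n n ℂ)
  else 0

/-- Real power of a Hermitian matrix via the functional calculus, extended by `0`. -/
noncomputable def mrpow {n : Type*} [Fintype n] [DecidableEq n] (A : Matrix n n ℂ) (α : ℝ) :
    Matrix n n ℂ :=
  if h : A.IsHermitian then h.cfc (fun t => t ^ α) else 0

/-- A completely positive linear map between matrix algebras (Choi–Kraus form). -/
def IsCPMap {n m : Type*} [Fintype n] [Fintype m] (Φ : Matrix n n ℂ → Matrix m m ℂ) : Prop :=
  ∃ (r : ℕ) (C : Fin r → Matrix n m ℂ), ∀ X, Φ X = ∑ i, (C i)ᴴ * X * C i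

/-- The matrix geometric mean `A^{1/2} (A^{-1/2} B A^{-1/2})^{1/2} A^{1/2}`. -/
noncomputable def geomMean {n : Type*} [Fintype n] [DecidableEq n] (A B : Matrix n n ℂ) :
    Matrix n n ℂ :=
  msqrt A * msqrt ((msqrt A)⁻¹ * B * (msqrt A)⁻¹) * msqrt A

/-- The weighted geometric mean `B^{1/2} (B^{-1/2} A B^{-1/2})^α B^{1/2}`. -/
noncomputable def wgeomMean {n : Type*} [Fintype n] [DecidableEq n] (α : ℝ)
    (A B : Matrix n n ℂ) : Matrix n n ℂ :=
  msqrt B * mrpow ((msqrt B)⁻¹ * A * (msqrt B)⁻¹) α * msqrt B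

/-- The harmonic mean `2 (A⁻¹ + B⁻¹)⁻¹`. -/
noncomputable def harmMean {n : Type*} [Fintype n] [DecidableEq n] (A B : Matrix n n ℂ) :
    Matrix n n ℂ :=
  (2 : ℂ) • (A⁻¹ + B⁻¹)⁻¹

/-!
`geomMean A B` is the unique positive semidefinite solution `X` of the Riccati equation
`X * A⁻¹ * X = B`: with `S = msqrt A`, the equation says `Y * Y = S⁻¹ * B * S⁻¹` for the positive
semidefinite `Y = S⁻¹ * X * S⁻¹`, and a positive semidefinite square root is unique. Congruence by
an invertible `C` maps solutions for `(A, B)` to solutions for `(Cᴴ * A * C, Cᴴ * B * C)` and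
preserves positivity, so uniqueness gives the invariance.
-/

open scoped MatrixOrder

namespace Matrix

variable {n : Type*} [Fintype n] [DecidableEq n]

lemma conjTranspose_mul_mul_same_mul_inv_mul {R : Type*} [CommRing R] [StarRing R]
    {X A B C : Matrix n n R} (hC : IsUnit C) (h : X * A⁻¹ * X = B) :
    (Cᴴ * X * C) * (Cᴴ * A * C)⁻¹ * (Cᴴ * X * C) = Cᴴ * B * C := by
  have hCdet : IsUnit C.det := (isUnit_iff_isUnit_det C).mp hC
  have hCHdet : IsUnit Cᴴ.det := by rw [det_conjTranspose]; exact hCdet.star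
  calc (Cᴴ * X * C) * (Cᴴ * A * C)⁻¹ * (Cᴴ * X * C)
      = Cᴴ * X * (C * C⁻¹) * A⁻¹ * (Cᴴ⁻¹ * Cᴴ) * X * C := by
        simp only [mul_inv_rev, Matrix.mul_assoc]
    _ = Cᴴ * B * C := by
        rw [mul_nonsing_inv C hCdet, nonsing_inv_mul _ hCHdet, ← h]
        simp only [Matrix.mul_assoc, Matrix.one_mul]

lemma msqrt_eq_cfcSqrt {A : Matrix n n ℂ} (hA : A.PosSemidef) : msqrt A = CFC.sqrt A := by
  rw [CFC.sqrt_eq_cfc, cfc_nnreal_eq_real _ A hA.nonneg, hA.1.cfc_eq]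
  simp only [msqrt, dif_pos hA, IsHermitian.cfc, Unitary.conjStarAlgAut_apply]
  congr 3
  funext i
  simp only [Function.comp_apply, Real.sqrt]
  rfl

lemma posSemidef_msqrt (A : Matrix n n ℂ) : (msqrt A).PosSemidef := by
  by_cases hA : A.PosSemidef
  · rw [msqrt_eq_cfcSqrt hA]; exact (CFC.sqrt_nonneg A).posSemidef
  · simp only [msqrt, dif_neg hA]; exact PosSemidef.zero

lemma msqrt_mul_msqrt {A : Matrix n n ℂ} (hA : A.PosSemidef) : msqrt A * msqrt A = A := by
  rw [msqrt_eq_cfcSqrt hA]; exact CFC.sqrt_mul_sqrt_self A hA.nonneg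

lemma msqrt_mul_self {A : Matrix n n ℂ} (hA : A.PosSemidef) : msqrt (A * A) = A := by
  have hAA : (A * A).PosSemidef := by
    simpa only [hA.1.eq] using posSemidef_conjTranspose_mul_self A
  rw [msqrt_eq_cfcSqrt hAA]
  exact CFC.sqrt_unique rfl hA.nonneg

lemma PosDef.isUnit_msqrt {A : Matrix n n ℂ} (hA : A.PosDef) : IsUnit (msqrt A) := by
  rw [msqrt_eq_cfcSqrt hA.posSemidef]
  exact (CFC.isUnit_sqrt_iff A hA.posSemidef.nonneg).mpr hA.isUnit

lemma posSemidef_geomMean (A B : Matrix n n ℂ) : (geomMean A B).PosSemidef := by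
  unfold geomMean
  simpa only [(posSemidef_msqrt A).1.eq] using
    (posSemidef_msqrt _).conjTranspose_mul_mul_same (msqrt A)

lemma inv_eq_inv_msqrt_mul_inv_msqrt {A : Matrix n n ℂ} (hA : A.PosSemidef) :
    A⁻¹ = (msqrt A)⁻¹ * (msqrt A)⁻¹ := by
  rw [← mul_inv_rev, msqrt_mul_msqrt hA]

lemma PosSemidef.inv_msqrt_mul_mul_inv_msqrt {B : Matrix n n ℂ} (hB : B.PosSemidef)
    (A : Matrix n n ℂ) :
    ((msqrt A)⁻¹ * B * (msqrt A)⁻¹).PosSemidef := by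
  have hSinv : (msqrt A)⁻¹ᴴ = (msqrt A)⁻¹ := by
    rw [conjTranspose_nonsing_inv, (posSemidef_msqrt A).1.eq]
  simpa only [hSinv] using hB.conjTranspose_mul_mul_same (msqrt A)⁻¹

lemma eq_geomMean_of_mul_inv_mul_eq {A B X : Matrix n n ℂ} (hA : A.PosDef) (hX : X.PosSemidef)
    (h : X * A⁻¹ * X = B) : X = geomMean A B := by
  have hS : IsUnit (msqrt A).det := (isUnit_iff_isUnit_det _).mp hA.isUnit_msqrt
  have hY := hX.inv_msqrt_mul_mul_inv_msqrt A
  rw [← h, geomMean, inv_eq_inv_msqrt_mul_inv_msqrt hA.posSemidef]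
  set S := msqrt A
  have hYY : (S⁻¹ * X * S⁻¹) * (S⁻¹ * X * S⁻¹) = S⁻¹ * (X * (S⁻¹ * S⁻¹) * X) * S⁻¹ := by
    simp only [Matrix.mul_assoc]
  rw [← hYY, msqrt_mul_self hY]
  simp only [Matrix.mul_assoc, mul_nonsing_inv_cancel_left _ _ hS, nonsing_inv_mul _ hS,
    Matrix.mul_one]

lemma geomMean_mul_inv_mul_geomMean {A B : Matrix n n ℂ} (hA : A.PosDef) (hB : B.PosSemidef) :
    geomMean A B * A⁻¹ * geomMean A B = B := by
  have hS : IsUnit (msqrt A).det := (isUnit_iff_isUnit_det _).mp hA.isUnit_msqrt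
  have hTT := msqrt_mul_msqrt (hB.inv_msqrt_mul_mul_inv_msqrt A)
  rw [geomMean, inv_eq_inv_msqrt_mul_inv_msqrt hA.posSemidef]
  set S := msqrt A
  set T := msqrt (S⁻¹ * B * S⁻¹)
  calc S * T * S * (S⁻¹ * S⁻¹) * (S * T * S) = S * (T * T) * S := by
        simp only [Matrix.mul_assoc, mul_nonsing_inv_cancel_left _ _ hS,
          nonsing_inv_mul_cancel_left _ _ hS]
    _ = B := by
        rw [hTT]
        simp only [Matrix.mul_assoc, mul_nonsing_inv_cancel_left _ _ hS, nonsing_inv_mul _ hS,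
          Matrix.mul_one]

end Matrix

/-- Congruence invariance of the geometric mean. -/
theorem geomMean_congruence {n : Type*} [Fintype n] [DecidableEq n]
    (A B C : Matrix n n ℂ) (hA : A.PosDef) (hB : B.PosDef) (hC : IsUnit C) :
    Cᴴ * geomMean A B * C = geomMean (Cᴴ * A * C) (Cᴴ * B * C) := by
  have hCA : (Cᴴ * A * C).PosDef := by
    simpa only [star_eq_conjTranspose] using (IsUnit.posDef_star_left_conjugate_iff hC).mpr hA
  exact eq_geomMean_of_mul_inv_mul_eq hCA
    ((posSemidef_geomMean A B).conjTranspose_mul_mul_same C)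
    (conjTranspose_mul_mul_same_mul_inv_mul hC (geomMean_mul_inv_mul_geomMean hA hB.posSemidef))
end

section
/- Let Φ be a completely positive linear map between matrix algebras. For positive definite matrices A, B with Φ(A), Φ(B) positive definite, let H(A,B) = 2(A⁻¹ + B⁻¹)⁻¹ denote the harmonic mean; then Φ(H(A,B)) ≤ H(Φ(A), Φ(B)). -/
open Matrix
open scoped ComplexOrder Classical

section Aux
open Matrix
open scoped ComplexOrder

lemma psd_sum {m ι : Type*} [Fintype m] (s : Finset ι) (f : ι → Matrix m m ℂ)
    (h : ∀ i ∈ s, (f i).PosSemidef) : (∑ i ∈ s, f i).PosSemidef := by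
  classical
  induction s using Finset.induction with
  | empty => simpa using Matrix.PosSemidef.zero
  | insert _ _ hni ih =>
    rw [Finset.sum_insert hni]
    exact (h _ (Finset.mem_insert_self _ _)).add (ih fun i hi => h i (Finset.mem_insert_of_mem hi))

lemma fromBlocks_sum' {n m ι : Type*} (s : Finset ι)
    (f : ι → Matrix n n ℂ) (g : ι → Matrix n m ℂ) (h : ι → Matrix m n ℂ) (k : ι → Matrix m m ℂ) :
    ∑ i ∈ s, fromBlocks (f i) (g i) (h i) (k i)
      = fromBlocks (∑ i ∈ s, f i) (∑ i ∈ s, g i) (∑ i ∈ s, h i) (∑ i ∈ s, k i) := by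
  classical
  induction s using Finset.induction with
  | empty => simp [fromBlocks_zero]
  | insert _ _ hni ih => simp [Finset.sum_insert hni, ih, fromBlocks_add]

lemma cp_block {n m : Type*} [Fintype n] [DecidableEq n] [Fintype m] [DecidableEq m]
    (r : ℕ) (C : Fin r → Matrix n m ℂ) (P X Q : Matrix n n ℂ)
    (h : (fromBlocks P X Xᴴ Q).PosSemidef) :
    (fromBlocks (∑ i, (C i)ᴴ * P * C i) (∑ i, (C i)ᴴ * X * C i)
      (∑ i, (C i)ᴴ * Xᴴ * C i) (∑ i, (C i)ᴴ * Q * C i)).PosSemidef := by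
  have key : ∀ i : Fin r,
      (fromBlocks (C i) 0 0 (C i))ᴴ * fromBlocks P X Xᴴ Q * (fromBlocks (C i) 0 0 (C i))
        = fromBlocks ((C i)ᴴ * P * C i) ((C i)ᴴ * X * C i)
            ((C i)ᴴ * Xᴴ * C i) ((C i)ᴴ * Q * C i) := by
    intro i
    simp [fromBlocks_conjTranspose, fromBlocks_multiply]
  rw [← fromBlocks_sum']
  simp_rw [← key]
  exact psd_sum _ _ fun i _ => h.conjTranspose_mul_mul_same _

set_option maxHeartbeats 1000000 in
lemma key_ineq {n m : Type*} [Fintype n] [DecidableEq n] [Fintype m] [DecidableEq m]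
    (r : ℕ) (C : Fin r → Matrix n m ℂ) (P X : Matrix n n ℂ) (hP : P.PosDef)
    (hΦP : (∑ i, (C i)ᴴ * P * C i).PosDef) (hX : Xᴴ = X) :
    ((∑ i, (C i)ᴴ * (X * P⁻¹ * X) * C i)
      - (∑ i, (C i)ᴴ * X * C i) * (∑ i, (C i)ᴴ * P * C i)⁻¹
          * (∑ i, (C i)ᴴ * X * C i)).PosSemidef := by
  haveI := hP.isUnit.invertible
  have h0 : (X * P⁻¹ * X - Xᴴ * P⁻¹ * X).PosSemidef := by
    rw [hX, sub_self]; exact Matrix.PosSemidef.zero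
  have h1 : (fromBlocks P X Xᴴ (X * P⁻¹ * X)).PosSemidef :=
    (Matrix.PosDef.fromBlocks₁₁ X (X * P⁻¹ * X) hP).mpr h0
  have h2 := cp_block r C P X (X * P⁻¹ * X) h1
  have hXh : (∑ i, (C i)ᴴ * X * C i : Matrix m m ℂ)ᴴ = ∑ i, (C i)ᴴ * Xᴴ * C i := by
    rw [conjTranspose_sum]
    exact Finset.sum_congr rfl fun i _ => by
      rw [Matrix.conjTranspose_mul, Matrix.conjTranspose_mul, conjTranspose_conjTranspose]
      exact (Matrix.mul_assoc _ _ _).symm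
  rw [← hXh] at h2
  haveI := hΦP.isUnit.invertible
  have h3 := (Matrix.PosDef.fromBlocks₁₁ _ _ hΦP).mp h2
  have hher : (∑ i, (C i)ᴴ * X * C i : Matrix m m ℂ)ᴴ = ∑ i, (C i)ᴴ * X * C i := by
    rw [hXh]; simp_rw [hX]
  rwa [hher] at h3

end Aux


lemma harm_eq {k : Type*} [Fintype k] [DecidableEq k] (A B : Matrix k k ℂ)
    (hA : A.PosDef) (hB : B.PosDef) :
    harmMean A B = (2 : ℂ) • (B - B * (A + B)⁻¹ * B) := by
  have hAu : IsUnit A.det := hA.det_pos.ne'.isUnit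
  have hBu : IsUnit B.det := hB.det_pos.ne'.isUnit
  have hSu : IsUnit (A + B).det := (hA.add hB).det_pos.ne'.isUnit
  have h1 : A⁻¹ + B⁻¹ = A⁻¹ * (A + B) * B⁻¹ := by
    rw [mul_add, add_mul, Matrix.nonsing_inv_mul A hAu, mul_assoc,
      Matrix.mul_nonsing_inv B hBu, Matrix.one_mul, Matrix.mul_one, add_comm]
  rw [harmMean, h1, Matrix.mul_inv_rev, Matrix.mul_inv_rev,
    Matrix.nonsing_inv_nonsing_inv A hAu, Matrix.nonsing_inv_nonsing_inv B hBu]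
  congr 1
  have hA' : (A : Matrix k k ℂ) = (A + B) - B := by abel
  calc B * ((A + B)⁻¹ * A) = B * (A + B)⁻¹ * ((A + B) - B) := by
        rw [← hA', mul_assoc]
    _ = B * ((A + B)⁻¹ * (A + B)) - B * (A + B)⁻¹ * B := by
        rw [mul_sub, mul_assoc]
    _ = B - B * (A + B)⁻¹ * B := by rw [Matrix.nonsing_inv_mul _ hSu, Matrix.mul_one]

/-- `Φ(H(A,B)) ≤ H(Φ(A), Φ(B))` for the harmonic mean and a completely positive map `Φ`. -/
theorem cp_harmMean {n m : Type*} [Fintype n] [DecidableEq n] [Fintype m] [DecidableEq m]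
    (Φ : Matrix n n ℂ → Matrix m m ℂ) (hΦ : IsCPMap Φ)
    (A B : Matrix n n ℂ) (hA : A.PosDef) (hB : B.PosDef)
    (hΦA : (Φ A).PosDef) (hΦB : (Φ B).PosDef) :
    (harmMean (Φ A) (Φ B) - Φ (harmMean A B)).PosSemidef := by
  obtain ⟨r, C, hC⟩ := hΦ
  have hadd : ∀ X Y : Matrix n n ℂ, Φ (X + Y) = Φ X + Φ Y := by
    intro X Y; simp [hC, Matrix.mul_add, Matrix.add_mul, Finset.sum_add_distrib]
  have hsub : ∀ X Y : Matrix n n ℂ, Φ (X - Y) = Φ X - Φ Y := by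
    intro X Y; simp [hC, Matrix.mul_sub, Matrix.sub_mul, Finset.sum_sub_distrib]
  have hsmul : ∀ (c : ℂ) (X : Matrix n n ℂ), Φ (c • X) = c • Φ X := by
    intro c X; simp [hC, Finset.smul_sum, Matrix.mul_smul, Matrix.smul_mul]
  have hS : (A + B).PosDef := hA.add hB
  have hΦS : (∑ i, (C i)ᴴ * (A + B) * C i).PosDef := by
    rw [← hC]; rw [hadd]; exact hΦA.add hΦB
  have key := key_ineq r C (A + B) B hS hΦS hB.1
  simp only [← hC] at key
  rw [hadd] at key
  rw [harm_eq (Φ A) (Φ B) hΦA hΦB, harm_eq A B hA hB, hsmul, hsub]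
  have heq : (2 : ℂ) • (Φ B - Φ B * (Φ A + Φ B)⁻¹ * Φ B)
      - (2 : ℂ) • (Φ B - Φ (B * (A + B)⁻¹ * B))
      = (Φ (B * (A + B)⁻¹ * B) - Φ B * (Φ A + Φ B)⁻¹ * Φ B)
        + (Φ (B * (A + B)⁻¹ * B) - Φ B * (Φ A + Φ B)⁻¹ * Φ B) := by
    rw [← smul_sub, two_smul]
    abel
  rw [heq]
  exact key.add key
end
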